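/- (Gaussian integral representation of the Fourier coefficient) Let χ = (r₁^{a₁},…,r_k^{a_k}) with r₁,…,r_k ∈ (1/n)ℤ/ℤ distinct and ∑ aᵢ = n, and let S be the set of injective n-tuples in (ℤ/nℤ)ⁿ. Then nⁿ · \widehat{1_S}(χ) = ∫_{ℂ^k} z₁^{a₁}⋯z_k^{a_k} · ∏_{x ∈ ℤ/nℤ} (∑_{i=1}^k e(−rᵢx) \overline{zᵢ}) dγ, where γ is the standard complex Gaussian measure on ℂ^k. -/

import Mathlib

/-!
Expanding the product over `x ∈ ZMod n` writes the integrand as a sum over maps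
`f : ZMod n → Fin k` of `∏ₓ e(-s_{f x} x)` times a product of one-variable Gaussian moments
`∫ zᵃ z̄ᵇ dγ = δ_{ab} a!`: rotation invariance of `γ` kills the moments with `a ≠ b`, and polar
coordinates turn the diagonal ones into `Γ(a + 1)`. On the other side, an injective
`x : Fin n → ZMod n` is a bijection, and writing `χ = s ∘ idx`, the bijections `σ` with
`f ∘ σ = idx` are the fiberwise bijections between the fibers of `idx` and of `f`: there are
`∏ᵢ aᵢ!` of them when `f` has fibers of sizes `aᵢ`, and none otherwise.
-/

open Finset

/-- `e(x) = exp(2πi x/n)` for `x ∈ ZMod n`, realizing the identification of the dual of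
`ZMod n` with `(1/n)ℤ/ℤ`. -/
noncomputable def eZ (n : ℕ) (x : ZMod n) : ℂ :=
  Complex.exp (2 * Real.pi * Complex.I * (x.val : ℂ) / (n : ℂ))

/-- The Fourier coefficient `\widehat{1_S}(r₁,…,r_n)` of the set `S` of injective
`n`-tuples in `(ZMod n)ⁿ`, namely `n^{-n} ∑_{x ∈ S} e(-∑ᵢ rᵢ xᵢ)`. -/
noncomputable def fourierS (n : ℕ) [NeZero n] (r : Fin n → ZMod n) : ℂ :=
  ((n : ℂ) ^ n)⁻¹ *
    ∑ x ∈ Finset.univ.filter (fun x : Fin n → ZMod n => Function.Injective x),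
      eZ n (-(∑ i, r i * x i))

open MeasureTheory

open scoped Nat

lemma AddChar.map_sum_eq_prod {A M ι : Type*} [AddCommMonoid A] [CommMonoid M] (ψ : AddChar A M)
    (s : Finset ι) (u : ι → A) : ψ (∑ i ∈ s, u i) = ∏ i ∈ s, ψ (u i) :=
  map_prod ψ.toMonoidHom (fun i => Multiplicative.ofAdd (u i)) s

lemma eZ_eq_stdAddChar (n : ℕ) [NeZero n] : eZ n = ZMod.stdAddChar := by
  funext x
  rw [eZ, ZMod.stdAddChar_apply, ZMod.toCircle_apply]

lemma sum_filter_injective_eq_sum_equiv {α β M : Type*} [Fintype α] [Fintype β] [DecidableEq α]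
    [DecidableEq β] [AddCommMonoid M] (h : Fintype.card α = Fintype.card β) (F : (α → β) → M) :
    ∑ x ∈ univ.filter (fun x : α → β => Function.Injective x), F x = ∑ σ : α ≃ β, F σ :=
  (sum_bij (fun (σ : α ≃ β) _ => ⇑σ) (fun σ _ => mem_filter.2 ⟨mem_univ _, σ.injective⟩)
    (fun _ _ _ _ h => Equiv.coe_fn_injective h)
    (fun x hx => ⟨Equiv.ofBijective x ((Fintype.bijective_iff_injective_and_card x).2
      ⟨(mem_filter.1 hx).2, h⟩), mem_univ _, rfl⟩) fun _ _ => rfl).symm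

section Fibers

variable {α β ι : Type*}

def fiberwiseEquivEquiv (f : α → ι) (g : β → ι) :
    {σ : α ≃ β // ∀ a, g (σ a) = f a} ≃ ∀ i, ({a // f a = i} ≃ {b // g b = i}) where
  toFun σ i := σ.1.subtypeEquiv fun a => by rw [σ.2]
  invFun e := ⟨Equiv.ofFiberEquiv e, Equiv.ofFiberEquiv_map e⟩
  left_inv σ := rfl
  right_inv e := by
    funext i
    ext ⟨a, rfl⟩
    rfl

lemma Fintype.card_equiv_eq_ite [Fintype α] [Fintype β] [DecidableEq α] [DecidableEq β] :
    Fintype.card (α ≃ β) = if Fintype.card α = Fintype.card β then (Fintype.card α)! else 0 := by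
  split_ifs with h
  · exact Fintype.card_equiv (Fintype.equivOfCardEq h)
  · exact Fintype.card_eq_zero_iff.2 ⟨fun e => h (Fintype.card_congr e)⟩

variable [DecidableEq ι]

def fiberCard [Fintype α] (f : α → ι) (i : ι) : ℕ := #{x | f x = i}

lemma card_fiberwise_equiv [Fintype α] [Fintype β] [Fintype ι] [DecidableEq α] [DecidableEq β]
    (f : α → ι) (g : β → ι) :
    Fintype.card {σ : α ≃ β // ∀ a, g (σ a) = f a} =
      ∏ i, if fiberCard f i = fiberCard g i then (fiberCard f i)! else 0 := by
  rw [Fintype.card_congr (fiberwiseEquivEquiv f g), Fintype.card_pi]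
  refine prod_congr rfl fun i _ => ?_
  rw [Fintype.card_equiv_eq_ite, Fintype.card_subtype, Fintype.card_subtype]
  rfl

lemma prod_sum_mul_eq_sum_prod_mul_prod_pow_fiberCard {R : Type*} [CommSemiring R] [Fintype α]
    [DecidableEq α] [Fintype ι] (c : α → ι → R) (w : ι → R) :
    ∏ a, ∑ i, c a i * w i = ∑ f : α → ι, (∏ a, c a (f a)) * ∏ i, w i ^ fiberCard f i := by
  rw [prod_univ_sum, Fintype.piFinset_univ]
  refine sum_congr rfl fun f _ => ?_
  rw [prod_mul_distrib, ← prod_fiberwise univ f fun a => w (f a)]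
  congr 1
  refine prod_congr rfl fun i _ => ?_
  rw [prod_congr rfl fun a ha => by rw [(mem_filter.1 ha).2], prod_const]
  rfl

lemma sum_equiv_prod_eq_sum_prod_fiberCard {R : Type*} [CommSemiring R] [Fintype α] [Fintype β]
    [Fintype ι] [DecidableEq α] [DecidableEq β] (f : α → ι) (c : β → ι → R) :
    ∑ σ : α ≃ β, ∏ a, c (σ a) (f a) =
      ∑ g : β → ι, (∏ i, if fiberCard f i = fiberCard g i then ((fiberCard f i)! : R) else 0) *
        ∏ b, c b (g b) := by
  have hterm : ∀ σ : α ≃ β, ∏ a, c (σ a) (f a) = ∏ b, c b (f (σ.symm b)) := fun σ =>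
    by rw [← σ.prod_comp fun b => c b (f (σ.symm b))]; simp only [Equiv.symm_apply_apply]
  simp_rw [hterm]
  rw [← sum_fiberwise univ (fun σ : α ≃ β => f ∘ σ.symm)]
  refine sum_congr rfl fun g _ => ?_
  have hcard : #{σ : α ≃ β | f ∘ σ.symm = g} = Fintype.card {σ : α ≃ β // ∀ a, g (σ a) = f a} := by
    rw [← Fintype.card_subtype]
    refine Fintype.card_congr (Equiv.subtypeEquivRight fun σ => ?_)
    constructor
    · rintro rfl a; simp
    · intro h; funext b; simpa using (h (σ.symm b)).symm
  rw [sum_congr rfl fun σ hσ => show ∏ b, c b (f (σ.symm b)) = ∏ b, c b (g b) by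
    rw [← (mem_filter.1 hσ).2]; rfl, sum_const, hcard,
    card_fiberwise_equiv, nsmul_eq_mul]
  push_cast
  rfl

end Fibers

noncomputable def complexGaussianDensity (w : ℂ) : ℝ := Real.pi⁻¹ * Real.exp (-‖w‖ ^ 2)

local notation "ρ" => complexGaussianDensity

lemma complexGaussianDensity_mul_circle (ζ : Circle) (w : ℂ) : ρ (ζ * w) = ρ w := by
  simp [complexGaussianDensity, Circle.norm_coe]

lemma integral_complexGaussianDensity_smul_comp_mul_circle {E : Type*} [NormedAddCommGroup E]
    [NormedSpace ℝ E] (ζ : Circle) (F : ℂ → E) :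
    ∫ w, ρ w • F (ζ * w) = ∫ w, ρ w • F w := by
  have h := ((rotation ζ).measurePreserving).integral_comp'
    (f := (rotation ζ).toMeasurableEquiv) (fun w => ρ w • F w)
  simpa [rotation_apply, complexGaussianDensity_mul_circle] using h

lemma integral_norm_pow_mul_exp_neg_norm_sq (m : ℕ) :
    ∫ w : ℂ, ‖w‖ ^ m * Real.exp (-‖w‖ ^ 2) = Real.pi * Real.Gamma (m / 2 + 1) := by
  have h := Complex.integral_rpow_mul_exp_neg_rpow (p := 2) (q := m) one_le_two
    (by linarith [(m.cast_nonneg : (0:ℝ) ≤ m)])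
  simp only [Real.rpow_natCast, Real.rpow_two] at h
  rw [h, add_div, div_self two_ne_zero]
  ring

lemma integrable_norm_pow_mul_exp_neg_norm_sq (m : ℕ) :
    Integrable fun w : ℂ => ‖w‖ ^ m * Real.exp (-‖w‖ ^ 2) := by
  refine Integrable.of_integral_ne_zero ?_
  rw [integral_norm_pow_mul_exp_neg_norm_sq]
  exact mul_ne_zero Real.pi_ne_zero (Real.Gamma_pos_of_pos (by positivity)).ne'

lemma integrable_complexGaussianDensity_smul_pow_mul_conj_pow (a b : ℕ) :
    Integrable fun w : ℂ => ρ w • (w ^ a * (starRingEnd ℂ) w ^ b) := by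
  refine ((integrable_norm_pow_mul_exp_neg_norm_sq (a + b)).const_mul Real.pi⁻¹).mono'
    (by unfold complexGaussianDensity; fun_prop) (Filter.Eventually.of_forall fun w => ?_)
  rw [norm_smul, norm_mul, norm_pow, norm_pow, RCLike.norm_conj, Real.norm_of_nonneg
    (by unfold complexGaussianDensity; positivity), complexGaussianDensity, pow_add]
  exact le_of_eq (by ring)

lemma integral_complexGaussianDensity_smul_pow_mul_conj_pow_self (a : ℕ) :
    ∫ w, ρ w • (w ^ a * (starRingEnd ℂ) w ^ a) = (a)! := by
  have h : (fun w : ℂ => ρ w • (w ^ a * (starRingEnd ℂ) w ^ a)) =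
      fun w => ((Real.pi⁻¹ * (‖w‖ ^ (2 * a) * Real.exp (-‖w‖ ^ 2)) : ℝ) : ℂ) := by
    funext w
    rw [← mul_pow, Complex.mul_conj, Complex.normSq_eq_norm_sq, Complex.real_smul,
      complexGaussianDensity]
    push_cast
    ring
  rw [h, integral_complex_ofReal, integral_const_mul, integral_norm_pow_mul_exp_neg_norm_sq]
  push_cast
  rw [mul_div_cancel_left₀ _ two_ne_zero, Real.Gamma_nat_eq_factorial, Complex.ofReal_natCast,
    inv_mul_cancel_left₀ (Complex.ofReal_ne_zero.2 Real.pi_ne_zero)]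

lemma integral_complexGaussianDensity_smul_pow_mul_conj_pow_of_ne {a b : ℕ} (hab : a ≠ b) :
    ∫ w, ρ w • (w ^ a * (starRingEnd ℂ) w ^ b) = 0 := by
  set d : ℤ := a - b
  have hd : (d : ℝ) ≠ 0 := by exact_mod_cast (by omega : d ≠ 0)
  set ζ := Circle.exp (Real.pi / d)
  have hζd : ((ζ ^ d : Circle) : ℂ) = (ζ : ℂ) ^ a * (starRingEnd ℂ) ζ ^ b := by
    rw [← Circle.coe_inv_eq_conj, zpow_sub, zpow_natCast, zpow_natCast]
    simp
  have hζ : (ζ : ℂ) ^ a * (starRingEnd ℂ) ζ ^ b ≠ 1 := by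
    rw [← hζd, Ne, Circle.coe_eq_one, ← Circle.exp_intCast_mul, mul_div_cancel₀ _ hd]
    exact Circle.exp_pi_ne_one
  have hrot : ((ζ : ℂ) ^ a * (starRingEnd ℂ) ζ ^ b) * ∫ w, ρ w • (w ^ a * (starRingEnd ℂ) w ^ b)
      = ∫ w, ρ w • (w ^ a * (starRingEnd ℂ) w ^ b) :=
    calc _ = ∫ w, ρ w • ((ζ * w) ^ a * (starRingEnd ℂ) (ζ * w) ^ b) := by
          rw [← integral_const_mul]
          congr 1; ext w
          simp only [Complex.real_smul, map_mul]
          ring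
      _ = _ := integral_complexGaussianDensity_smul_comp_mul_circle ζ
          (fun w => w ^ a * (starRingEnd ℂ) w ^ b)
  have := sub_eq_zero.2 hrot
  rw [← sub_one_mul, mul_eq_zero] at this
  exact this.resolve_left (sub_ne_zero.2 hζ)

lemma integral_complexGaussianDensity_smul_pow_mul_conj_pow (a b : ℕ) :
    ∫ w, ρ w • (w ^ a * (starRingEnd ℂ) w ^ b) = if a = b then ((a)! : ℂ) else 0 := by
  split_ifs with hab
  · rw [hab, integral_complexGaussianDensity_smul_pow_mul_conj_pow_self]
  · exact integral_complexGaussianDensity_smul_pow_mul_conj_pow_of_ne hab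

section Pi

variable {ι : Type*} [Fintype ι]

lemma prod_complexGaussianDensity (z : ι → ℂ) :
    ∏ i, ρ (z i) = Real.pi⁻¹ ^ Fintype.card ι * Real.exp (-∑ i, ‖z i‖ ^ 2) := by
  rw [← sum_neg_distrib, Real.exp_sum]
  simp only [complexGaussianDensity, prod_mul_distrib, prod_const, card_univ]

lemma integral_prod_complexGaussianDensity_smul_prod (F : ι → ℂ → ℂ) :
    ∫ z : ι → ℂ, (∏ i, ρ (z i)) • ∏ i, F i (z i) = ∏ i, ∫ w, ρ w • F i w := by
  simp_rw [Complex.real_smul, Complex.ofReal_prod, ← prod_mul_distrib]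
  rw [volume_pi, integral_fintype_prod_eq_prod fun i w => (ρ w : ℂ) * F i w]

lemma integrable_prod_complexGaussianDensity_smul_prod_pow_mul_conj_pow (a b : ι → ℕ) :
    Integrable fun z : ι → ℂ =>
      (∏ i, ρ (z i)) • ∏ i, (z i ^ a i * (starRingEnd ℂ) (z i) ^ b i) := by
  simp_rw [Complex.real_smul, Complex.ofReal_prod, ← prod_mul_distrib, ← Complex.real_smul]
  rw [volume_pi]
  exact Integrable.fintype_prod fun i => integrable_complexGaussianDensity_smul_pow_mul_conj_pow _ _

lemma integral_prod_complexGaussianDensity_smul_prod_pow_mul_conj_pow (a b : ι → ℕ) :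
    ∫ z : ι → ℂ, (∏ i, ρ (z i)) • ∏ i, (z i ^ a i * (starRingEnd ℂ) (z i) ^ b i) =
      ∏ i, if a i = b i then ((a i)! : ℂ) else 0 := by
  rw [integral_prod_complexGaussianDensity_smul_prod fun i w => w ^ a i * (starRingEnd ℂ) w ^ b i]
  exact prod_congr rfl fun i _ => integral_complexGaussianDensity_smul_pow_mul_conj_pow _ _

end Pi

section Expansion

variable {ι X : Type*} [Fintype ι] [DecidableEq ι] [Fintype X] [DecidableEq X]

theorem integral_prod_complexGaussianDensity_smul_prod_pow_mul_prod_sum (a : ι → ℕ)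
    (c : X → ι → ℂ) :
    ∫ z : ι → ℂ, (∏ i, ρ (z i)) •
        ((∏ i, z i ^ a i) * ∏ x, ∑ i, c x i * (starRingEnd ℂ) (z i)) =
      ∑ f : X → ι, (∏ i, if a i = fiberCard f i then ((a i)! : ℂ) else 0) * ∏ x, c x (f x) := by
  have hexpand : ∀ z : ι → ℂ, (∏ i, ρ (z i)) •
      ((∏ i, z i ^ a i) * ∏ x, ∑ i, c x i * (starRingEnd ℂ) (z i)) =
      ∑ f : X → ι, (∏ x, c x (f x)) *
        (∏ i, ρ (z i)) • ∏ i, (z i ^ a i * (starRingEnd ℂ) (z i) ^ fiberCard f i) := fun z => by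
    rw [prod_sum_mul_eq_sum_prod_mul_prod_pow_fiberCard, mul_sum, smul_sum]
    refine sum_congr rfl fun f _ => ?_
    rw [prod_mul_distrib, mul_smul_comm]
    ring_nf
  simp_rw [hexpand]
  rw [integral_finsetSum _ fun f _ =>
    (integrable_prod_complexGaussianDensity_smul_prod_pow_mul_conj_pow _ _).const_mul _]
  refine sum_congr rfl fun f _ => ?_
  rw [integral_const_mul, integral_prod_complexGaussianDensity_smul_prod_pow_mul_conj_pow, mul_comm]

end Expansion

theorem fourierS_gaussian_representation_general (n k : ℕ) [NeZero n] (a : Fin k → ℕ)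
    (s : Fin k → ZMod n) (hs : Function.Injective s)
    (χ : Fin n → ZMod n)
    (hcount : ∀ i, (Finset.univ.filter (fun j => χ j = s i)).card = a i)
    (hcover : ∀ j, ∃ i, χ j = s i) :
    (n : ℂ) ^ n * fourierS n χ =
      ∫ z : Fin k → ℂ,
        ((Real.pi⁻¹ ^ k * Real.exp (-(∑ i, ‖z i‖ ^ 2))) : ℝ) •
          ((∏ i, (z i) ^ (a i)) *
            ∏ x : ZMod n, ∑ i, eZ n (-(s i * x)) * (starRingEnd ℂ) (z i)) := by
  choose idx hidx using hcover
  set c : ZMod n → Fin k → ℂ := fun y i => eZ n (-(s i * y))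
  have hfiber : ∀ i, fiberCard idx i = a i := fun i => by
    rw [← hcount i, fiberCard]
    congr 1
    exact filter_congr fun j _ => by rw [hidx, hs.eq_iff]
  have hweight : ∀ σ : Fin n ≃ ZMod n, eZ n (-(∑ j, χ j * σ j)) = ∏ j, c (σ j) (idx j) :=
    fun σ => by simp only [c, eZ_eq_stdAddChar, ← sum_neg_distrib, AddChar.map_sum_eq_prod, hidx]
  have hdensity : ∀ z : Fin k → ℂ,
      Real.pi⁻¹ ^ k * Real.exp (-(∑ i, ‖z i‖ ^ 2)) = ∏ i, ρ (z i) := fun z => by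
    rw [prod_complexGaussianDensity, Fintype.card_fin]
  calc (n : ℂ) ^ n * fourierS n χ
      = ∑ x ∈ univ.filter (fun x : Fin n → ZMod n => Function.Injective x),
          eZ n (-(∑ j, χ j * x j)) := by
        rw [fourierS, mul_inv_cancel_left₀ (pow_ne_zero _ (NeZero.ne _))]
    _ = ∑ σ : Fin n ≃ ZMod n, ∏ j, c (σ j) (idx j) := by
        rw [sum_filter_injective_eq_sum_equiv (by simp)]
        exact sum_congr rfl fun σ _ => hweight σ
    _ = ∑ f : ZMod n → Fin k,
          (∏ i, if a i = fiberCard f i then ((a i)! : ℂ) else 0) * ∏ y, c y (f y) := by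
        simp only [sum_equiv_prod_eq_sum_prod_fiberCard, hfiber]
    _ = _ := by
        simp_rw [hdensity]
        exact (integral_prod_complexGaussianDensity_smul_prod_pow_mul_prod_sum a c).symm

/-- Gaussian integral representation: for `χ = (r₁^{a₁},…,r_k^{a_k})` with distinct
values `s i` of multiplicities `a i`,
`nⁿ \widehat{1_S}(χ) = ∫ z₁^{a₁}⋯z_k^{a_k} ∏_{x∈ZMod n} (∑ᵢ e(−sᵢx) conj zᵢ) dγ`. -/
theorem fourierS_gaussian_representation (n k : ℕ) [NeZero n] (a : Fin k → ℕ)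
    (s : Fin k → ZMod n) (hs : Function.Injective s) (ha : ∑ i, a i = n)
    (χ : Fin n → ZMod n)
    (hcount : ∀ i, (Finset.univ.filter (fun j => χ j = s i)).card = a i)
    (hcover : ∀ j, ∃ i, χ j = s i) :
    (n : ℂ) ^ n * fourierS n χ =
      ∫ z : Fin k → ℂ,
        ((Real.pi⁻¹ ^ k * Real.exp (-(∑ i, ‖z i‖ ^ 2))) : ℝ) •
          ((∏ i, (z i) ^ (a i)) *
            ∏ x : ZMod n, ∑ i, eZ n (-(s i * x)) * (starRingEnd ℂ) (z i)) :=
  fourierS_gaussian_representation_general n k a s hs χ hcount hcover
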